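/- Let A be a Batalin-Vilkovisky algebra. Then the map Ψ: A → End(A), a ↦ l_a (left multiplication by a), is an injective morphism of generalized Loday-Gerstenhaber algebras, where End(A) carries the composition product and the derived bracket [f,g]_{−Δ} := [[f,−Δ],g] (graded commutators of endomorphisms) associated to the operator −Δ; in particular l_{{a,b}} = [[l_a, −Δ], l_b] for all a, b ∈ A. -/

import Mathlib

/-!
Statement 19 (Menichi, Theorem `injection d'une BV-algebre dans End`):

Let `A` be a Batalin-Vilkovisky algebra.  Then the map `Ψ : A → End A`,
`a ↦ l_a` (left multiplication) is an injective morphism of generalized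
Loday-Gerstenhaber algebras, where `End A` carries the composition product and
the derived bracket `[f,g]_{-Δ} = [[f,-Δ],g]` (graded commutators of
endomorphisms) associated to the operator `-Δ`; in particular
`l_{{a,b}} = [[l_a,-Δ],l_b]` for all `a, b ∈ A`.

Graded objects are modeled as internally `ℤ`-graded `k`-algebras; homogeneous
elements carry explicit degrees and Koszul signs use `Int.negOnePow`.
-/

/-- `(-1)^n` as an integer, for `n : ℤ`. -/
def sgn (n : ℤ) : ℤ := (Int.negOnePow n : ℤˣ)

/-- A Gerstenhaber algebra structure on an internally `ℤ`-graded `k`-algebra. -/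
structure GerstenhaberAlgebra (k : Type*) [CommRing k]
    (A : Type*) [Ring A] [Algebra k A]
    (𝒜 : ℤ → Submodule k A) [GradedRing 𝒜] where
  bracket : A →ₗ[k] A →ₗ[k] A
  bracket_mem : ∀ ⦃i j : ℤ⦄ ⦃a b : A⦄, a ∈ 𝒜 i → b ∈ 𝒜 j →
    bracket a b ∈ 𝒜 (i + j + 1)
  mul_graded_comm : ∀ ⦃i j : ℤ⦄ ⦃a b : A⦄, a ∈ 𝒜 i → b ∈ 𝒜 j →
    a * b = sgn (i * j) • (b * a)
  bracket_antisymm : ∀ ⦃i j : ℤ⦄ ⦃a b : A⦄, a ∈ 𝒜 i → b ∈ 𝒜 j →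
    bracket a b = -(sgn ((i + 1) * (j + 1)) • bracket b a)
  jacobi : ∀ ⦃i j : ℤ⦄ ⦃a b : A⦄ (c : A), a ∈ 𝒜 i → b ∈ 𝒜 j →
    bracket a (bracket b c) =
      bracket (bracket a b) c + sgn ((i + 1) * (j + 1)) • bracket b (bracket a c)
  poisson : ∀ ⦃i j : ℤ⦄ ⦃a b : A⦄ (c : A), a ∈ 𝒜 i → b ∈ 𝒜 j →
    bracket a (b * c) = bracket a b * c + sgn ((i + 1) * j) • (b * bracket a c)

/-- A Batalin-Vilkovisky algebra structure: `Δ` has degree `1`, squares to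
zero, and generates the bracket. -/
structure IsBatalinVilkovisky {k : Type*} [CommRing k]
    {A : Type*} [Ring A] [Algebra k A]
    {𝒜 : ℤ → Submodule k A} [GradedRing 𝒜]
    (G : GerstenhaberAlgebra k A 𝒜) (Δ : A →ₗ[k] A) : Prop where
  delta_mem : ∀ ⦃i : ℤ⦄ ⦃a : A⦄, a ∈ 𝒜 i → Δ a ∈ 𝒜 (i + 1)
  delta_delta : Δ ∘ₗ Δ = 0
  bracket_eq : ∀ ⦃i : ℤ⦄ ⦃a : A⦄ (b : A), a ∈ 𝒜 i →
    G.bracket a b = sgn i • (Δ (a * b) - Δ a * b - sgn i • (a * Δ b))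

/-- The graded commutator `[f,g] = f ∘ g - (-1)^{|f||g|} g ∘ f` of two
endomorphisms `f` of degree `p` and `g` of degree `q`. -/
def gradedCommutator {k : Type*} [CommRing k] {A : Type*} [AddCommGroup A]
    [Module k A] (f g : A →ₗ[k] A) (p q : ℤ) : A →ₗ[k] A :=
  f ∘ₗ g - sgn (p * q) • (g ∘ₗ f)

/-!
Left multiplication turns the BV identity into an identity of operators: for `a` of degree `i`,
`[l_a, -Δ] = ad_a + (-1)^i l_{Δa}`, where `ad_a = {a, -}`. Bracketing with `l_b` kills the second
summand because `l_{Δa}` and `l_b` graded-commute (graded commutativity of `A`), while the Poisson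
relation says exactly that `[ad_a, l_b] = l_{{a,b}}`.
-/

open LinearMap

theorem sgn_mul_sgn_self (n : ℤ) : sgn n * sgn n = 1 := by
  simp [sgn, ← Units.val_mul]

section GradedCommutator

variable {k : Type*} [CommRing k] {A : Type*} [AddCommGroup A] [Module k A]

theorem gradedCommutator_add_left (f f' g : A →ₗ[k] A) (p q : ℤ) :
    gradedCommutator (f + f') g p q = gradedCommutator f g p q + gradedCommutator f' g p q := by
  simp only [gradedCommutator, add_comp, comp_add, smul_add]
  abel

theorem gradedCommutator_smul_left (c : ℤ) (f g : A →ₗ[k] A) (p q : ℤ) :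
    gradedCommutator (c • f) g p q = c • gradedCommutator f g p q := by
  simp only [gradedCommutator, smul_comp, comp_smul, smul_sub, smul_comm c]

end GradedCommutator

section GradedAlgebra

variable {k : Type*} [CommRing k] {A : Type*} [Ring A] [Algebra k A]
  {𝒜 : ℤ → Submodule k A} [GradedRing 𝒜]

namespace GerstenhaberAlgebra

variable {i j : ℤ} {a b : A}

theorem gradedCommutator_mulLeft_mulLeft (G : GerstenhaberAlgebra k A 𝒜) (ha : a ∈ 𝒜 i)
    (hb : b ∈ 𝒜 j) : gradedCommutator (mulLeft k a) (mulLeft k b) i j = 0 := by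
  ext c
  simp only [gradedCommutator, LinearMap.sub_apply, comp_apply, LinearMap.smul_apply,
    mulLeft_apply, LinearMap.zero_apply]
  rw [← mul_assoc, G.mul_graded_comm ha hb, smul_mul_assoc, mul_assoc, sub_self]

theorem gradedCommutator_bracket_mulLeft (G : GerstenhaberAlgebra k A 𝒜) (ha : a ∈ 𝒜 i)
    (hb : b ∈ 𝒜 j) :
    gradedCommutator (G.bracket a) (mulLeft k b) (i + 1) j = mulLeft k (G.bracket a b) := by
  ext c
  simp [gradedCommutator, G.poisson c ha hb]

end GerstenhaberAlgebra

namespace IsBatalinVilkovisky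

variable {G : GerstenhaberAlgebra k A 𝒜} {Δ : A →ₗ[k] A} {i : ℤ} {a : A}

theorem gradedCommutator_mulLeft_neg (hBV : IsBatalinVilkovisky G Δ) (ha : a ∈ 𝒜 i) :
    gradedCommutator (mulLeft k a) (-Δ) i 1 = G.bracket a + sgn i • mulLeft k (Δ a) := by
  ext c
  simp only [gradedCommutator, mul_one, LinearMap.sub_apply, comp_apply, LinearMap.neg_apply,
    LinearMap.smul_apply, LinearMap.add_apply, mulLeft_apply, map_neg, hBV.bracket_eq c ha,
    smul_sub, smul_neg, smul_smul, sgn_mul_sgn_self, one_smul]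
  abel

end IsBatalinVilkovisky

end GradedAlgebra

/-- **Statement 19.**  For a Batalin-Vilkovisky algebra `A`, the map
`Ψ : a ↦ l_a` into the endomorphisms of `A` is injective, multiplicative
(`l_{ab} = l_a ∘ l_b`, so it is a morphism of graded algebras into `End A`
with the composition product), and sends the Gerstenhaber bracket to the
derived bracket associated to `-Δ`:
`l_{{a,b}} = [[l_a, -Δ], l_b]` for homogeneous `a, b`
(`l_a` has the degree of `a`, `-Δ` has degree `1`);
i.e. `Ψ` is an injective morphism of generalized Loday-Gerstenhaber algebras. -/
theorem statement19 (k : Type*) [CommRing k]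
    (A : Type*) [Ring A] [Algebra k A]
    (𝒜 : ℤ → Submodule k A) [GradedRing 𝒜]
    (G : GerstenhaberAlgebra k A 𝒜)
    (Δ : A →ₗ[k] A)
    (hBV : IsBatalinVilkovisky G Δ) :
    Function.Injective (fun a : A => LinearMap.mulLeft k a) ∧
    (∀ a b : A,
        LinearMap.mulLeft k (a * b) =
          LinearMap.mulLeft k a ∘ₗ LinearMap.mulLeft k b) ∧
    (∀ ⦃i j : ℤ⦄ ⦃a b : A⦄, a ∈ 𝒜 i → b ∈ 𝒜 j →
        LinearMap.mulLeft k (G.bracket a b) =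
          gradedCommutator
            (gradedCommutator (LinearMap.mulLeft k a) (-Δ) i 1)
            (LinearMap.mulLeft k b) (i + 1) j) := by
  refine ⟨fun _ _ h => mulLeft_inj.mp h, mulLeft_mul k A, fun i j a b ha hb => ?_⟩
  rw [hBV.gradedCommutator_mulLeft_neg ha, gradedCommutator_add_left, gradedCommutator_smul_left,
    G.gradedCommutator_mulLeft_mulLeft (hBV.delta_mem ha) hb, smul_zero, add_zero,
    G.gradedCommutator_bracket_mulLeft ha hb]
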